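/- Label size under landmark coverage: let 1 ≤ k ≤ n and let ε ∈ ℝ with ε ≥ 0. Suppose the standard landmark-based method with landmarks v_1, …, v_k answers at least (1-ε)n² of the n² ordered pairs correctly, i.e., the number of ordered pairs (s,t) ∈ V × V with min_{1 ≤ i ≤ k} ( d_G(s, v_i) + d_G(v_i, t) ) = d_G(s, t) is at least (1-ε)·n². Then the total size of the pruned landmark labeling index satisfies Σ_{u ∈ V} |L'_n(u)| ≤ k·n + ε·n², so the average label size per vertex is at most k + ε·n. -/

import Mathlib

open SimpleGraph

/-- The 2-hop query value computed from a label assignment `L`: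
the minimum of `d₁ + d₂` over common label vertices, `∞` if none. -/
noncomputable def Query {V : Type*} (L : V → Set (V × ℕ∞)) (s t : V) : ℕ∞ :=
  sInf {x : ℕ∞ | ∃ w d₁ d₂, (w, d₁) ∈ L s ∧ (w, d₂) ∈ L t ∧ x = d₁ + d₂}

/- The naive landmark labels `L_k`. -/
open Classical in
noncomputable def naiveL {V : Type*} (G : SimpleGraph V) (ord : ℕ → V) :
    ℕ → V → Set (V × ℕ∞)
  | 0 => fun _ => ∅
  | (k + 1) => fun u =>
      if G.edist (ord (k + 1)) u < ⊤ then
        naiveL G ord k u ∪ {(ord (k + 1), G.edist (ord (k + 1)) u)}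
      else naiveL G ord k u

/- The pruned landmark labels `L'_k`. -/
open Classical in
noncomputable def prunedL {V : Type*} (G : SimpleGraph V) (ord : ℕ → V) :
    ℕ → V → Set (V × ℕ∞)
  | 0 => fun _ => ∅
  | (k + 1) => fun u =>
      if G.edist (ord (k + 1)) u < ⊤ ∧
          G.edist (ord (k + 1)) u < Query (prunedL G ord k) (ord (k + 1)) u then
        prunedL G ord k u ∪ {(ord (k + 1), G.edist (ord (k + 1)) u)}
      else prunedL G ord k u

/-- `P_G(s,t)`: the set of vertices on shortest paths between `s` and `t`. -/
def PG {V : Type*} (G : SimpleGraph V) (s t : V) : Set V :=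
  {w | G.edist s w + G.edist w t = G.edist s t}
section Aux
variable {V : Type*} {G : SimpleGraph V} {ord : ℕ → V}

lemma prunedL_succ_subset (b : ℕ) (u : V) :
    prunedL G ord b u ⊆ prunedL G ord (b+1) u := by
  simp only [prunedL]
  split_ifs
  · exact Set.subset_union_left
  · exact le_refl _

lemma prunedL_mono {a b : ℕ} (h : a ≤ b) (u : V) :
    prunedL G ord a u ⊆ prunedL G ord b u := by
  induction b with
  | zero => simpa [Nat.le_zero.mp h] using le_refl _
  | succ b ih =>
    rcases Nat.le_succ_iff_eq_or_le.mp h with h1 | h2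
    · exact h1 ▸ le_refl _
    · exact (ih h2).trans (prunedL_succ_subset b u)

lemma Query_anti {L L' : V → Set (V × ℕ∞)} (h : ∀ u, L u ⊆ L' u) (s t : V) :
    Query L' s t ≤ Query L s t := by
  apply sInf_le_sInf
  rintro x ⟨w, d₁, d₂, h1, h2, rfl⟩
  exact ⟨w, d₁, d₂, h s h1, h t h2, rfl⟩

lemma Query_le {L : V → Set (V × ℕ∞)} {s t w : V} {d₁ d₂ : ℕ∞}
    (h1 : (w, d₁) ∈ L s) (h2 : (w, d₂) ∈ L t) : Query L s t ≤ d₁ + d₂ :=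
  sInf_le ⟨w, d₁, d₂, h1, h2, rfl⟩

lemma exists_of_Query_le {L : V → Set (V × ℕ∞)} {s t : V} {c : ℕ∞} (hc : c < ⊤)
    (h : Query L s t ≤ c) :
    ∃ w d₁ d₂, (w, d₁) ∈ L s ∧ (w, d₂) ∈ L t ∧ d₁ + d₂ ≤ c := by
  have hne : {x : ℕ∞ | ∃ w d₁ d₂, (w, d₁) ∈ L s ∧ (w, d₂) ∈ L t ∧ x = d₁ + d₂}.Nonempty := by
    by_contra hne
    rw [Set.not_nonempty_iff_eq_empty] at hne
    rw [Query, hne, sInf_empty] at h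
    exact absurd (lt_of_le_of_lt h hc) (lt_irrefl _)
  obtain ⟨w, d₁, d₂, h1, h2, heq⟩ := csInf_mem hne
  exact ⟨w, d₁, d₂, h1, h2, heq ▸ h⟩


lemma prunedL_mem {m : ℕ} {u w : V} {d : ℕ∞} (h : (w, d) ∈ prunedL G ord m u) :
    ∃ i, 1 ≤ i ∧ i ≤ m ∧ w = ord i ∧ d = G.edist (ord i) u ∧ G.edist (ord i) u < ⊤ ∧
      G.edist (ord i) u < Query (prunedL G ord (i - 1)) (ord i) u := by
  induction m with
  | zero => simp [prunedL] at h
  | succ b ih =>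
    simp only [prunedL] at h
    split_ifs at h with hcond
    · rcases h with h | h
      · obtain ⟨i, h1, h2, rest⟩ := ih h
        exact ⟨i, h1, h2.trans (Nat.le_succ b), rest⟩
      · simp only [Set.mem_singleton_iff, Prod.mk.injEq] at h
        refine ⟨b + 1, Nat.le_add_left 1 b, le_refl _, h.1, h.2, hcond.1, ?_⟩
        simpa using hcond.2
    · obtain ⟨i, h1, h2, rest⟩ := ih h
      exact ⟨i, h1, h2.trans (Nat.le_succ b), rest⟩

lemma PG_comm {s t w : V} (h : w ∈ PG G t s) : w ∈ PG G s t := by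
  simp only [PG, Set.mem_setOf_eq] at *
  rw [edist_comm (G:=G) (u:=s) (v:=w), edist_comm (G:=G) (u:=w) (v:=t), edist_comm (G:=G) (u:=s) (v:=t), add_comm]
  exact h

lemma prune_step {s t : V} {j : ℕ}
    (hPG : G.edist s (ord j) + G.edist (ord j) t = G.edist s t)
    (hst : G.edist s t < ⊤)
    (hQ : Query (prunedL G ord (j - 1)) (ord j) s ≤ G.edist (ord j) s) :
    ∃ j', 1 ≤ j' ∧ j' ≤ j - 1 ∧ ord j' ∈ PG G s t := by
  have hds : G.edist (ord j) s < ⊤ := by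
    rw [G.edist_comm]
    exact lt_of_le_of_lt (le_trans le_self_add hPG.le) hst
  obtain ⟨w, d₁, d₂, h1, h2, hle⟩ := exists_of_Query_le hds hQ
  obtain ⟨j', hj'1, hj'2, hw, hd₂, -, -⟩ := prunedL_mem h2
  obtain ⟨j'', hj''1, hj''2, hw', hd₁, -, -⟩ := prunedL_mem h1
  refine ⟨j', hj'1, hj'2, ?_⟩
  have hwd₁ : d₁ = G.edist w (ord j) := by rw [hd₁, ← hw']
  have hwd₂ : d₂ = G.edist w s := by rw [hd₂, ← hw]
  have hle' : G.edist s w + G.edist w t ≤ G.edist s t := by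
    calc G.edist s w + G.edist w t
        ≤ G.edist s w + (G.edist w (ord j) + G.edist (ord j) t) :=
          add_le_add_right (G.edist_triangle) _
      _ = (G.edist w s + G.edist w (ord j)) + G.edist (ord j) t := by
          rw [edist_comm (G:=G) (u:=s) (v:=w), add_assoc]
      _ = (d₂ + d₁) + G.edist (ord j) t := by rw [hwd₁, hwd₂]
      _ ≤ G.edist (ord j) s + G.edist (ord j) t := by
          rw [add_comm d₂ d₁]; exact add_le_add_left hle _
      _ = G.edist s t := by rw [edist_comm (G:=G) (u:=ord j) (v:=s)]; exact hPG
  have h2' : G.edist s t ≤ G.edist s w + G.edist w t := G.edist_triangle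
  rw [hw] at hle' h2'
  exact le_antisymm hle' h2'

lemma query_correct {m : ℕ} {s t : V} (hst : G.edist s t < ⊤) :
    ∀ j, 1 ≤ j → j ≤ m → ord j ∈ PG G s t →
      Query (prunedL G ord m) s t ≤ G.edist s t := by
  intro j
  induction j using Nat.strong_induction_on with
  | _ j ih =>
  intro hj1 hjm hPG
  simp only [PG, Set.mem_setOf_eq] at hPG
  obtain ⟨jp, rfl⟩ : ∃ jp, j = jp + 1 := ⟨j - 1, (Nat.succ_pred_eq_of_pos hj1).symm⟩
  have hsub : jp + 1 - 1 = jp := rfl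
  by_cases hqs : Query (prunedL G ord jp) (ord (jp + 1)) s ≤ G.edist (ord (jp + 1)) s
  · obtain ⟨j', h1, h2, h3⟩ := prune_step hPG hst (by rw [hsub]; exact hqs)
    rw [hsub] at h2
    exact ih j' (Nat.lt_succ_of_le h2) h1 (le_trans (h2.trans (Nat.le_succ jp)) hjm) h3
  · by_cases hqt : Query (prunedL G ord jp) (ord (jp + 1)) t ≤ G.edist (ord (jp + 1)) t
    · have hPG' : G.edist t (ord (jp + 1)) + G.edist (ord (jp + 1)) s = G.edist t s := by
        rw [edist_comm (G:=G) (u:=t) (v:=ord (jp+1)), edist_comm (G:=G) (u:=ord (jp+1)) (v:=s),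
          edist_comm (G:=G) (u:=t) (v:=s), add_comm]
        exact hPG
      have hst' : G.edist t s < ⊤ := by rwa [G.edist_comm]
      obtain ⟨j', h1, h2, h3⟩ := prune_step hPG' hst' (by rw [hsub]; exact hqt)
      rw [hsub] at h2
      exact ih j' (Nat.lt_succ_of_le h2) h1 (le_trans (h2.trans (Nat.le_succ jp)) hjm)
        (PG_comm h3)
    · push_neg at hqs hqt
      have hds : G.edist (ord (jp+1)) s < ⊤ := by
        rw [G.edist_comm]
        exact lt_of_le_of_lt (le_trans le_self_add hPG.le) hst
      have hdt : G.edist (ord (jp+1)) t < ⊤ :=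
        lt_of_le_of_lt (le_trans le_add_self hPG.le) hst
      have hmem_s : (ord (jp+1), G.edist (ord (jp+1)) s) ∈ prunedL G ord (jp+1) s := by
        simp only [prunedL]
        split_ifs with hcnd
        · exact Set.mem_union_right _ rfl
        · exact absurd ⟨hds, hqs⟩ hcnd
      have hmem_t : (ord (jp+1), G.edist (ord (jp+1)) t) ∈ prunedL G ord (jp+1) t := by
        simp only [prunedL]
        split_ifs with hcnd
        · exact Set.mem_union_right _ rfl
        · exact absurd ⟨hdt, hqt⟩ hcnd
      have hq : Query (prunedL G ord (jp+1)) s t ≤ G.edist s t := by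
        refine le_trans (Query_le hmem_s hmem_t) ?_
        rw [edist_comm (G:=G) (u:=ord (jp+1)) (v:=s)]
        exact hPG.le
      exact le_trans (Query_anti (fun u => prunedL_mono hjm u) s t) hq

end Aux

/-- Label size under landmark coverage (Theorem 3 of the paper): if the standard
landmark-based method with landmarks `v_1, …, v_k` answers at least `(1-ε)n²` of the
`n²` ordered pairs correctly, then `Σ_u |L'_n(u)| ≤ k·n + ε·n²`, i.e. the average
label size per vertex is at most `k + ε·n`. -/
theorem prunedL_total_size_le {V : Type*} [Fintype V] (G : SimpleGraph V)
    (n : ℕ) (ord : ℕ → V)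
    (hinj : ∀ i ∈ Finset.Icc 1 n, ∀ j ∈ Finset.Icc 1 n, ord i = ord j → i = j)
    (hsurj : ∀ u : V, ∃ i ∈ Finset.Icc 1 n, ord i = u)
    (k : ℕ) (hk1 : 1 ≤ k) (hkn : k ≤ n) (ε : ℝ) (hε : 0 ≤ ε)
    (hcov : (1 - ε) * (n : ℝ) ^ 2 ≤
      (({p : V × V |
          (⨅ i ∈ Finset.Icc 1 k, (G.edist p.1 (ord i) + G.edist (ord i) p.2))
            = G.edist p.1 p.2}).ncard : ℝ)) :
    ((∑ u : V, (prunedL G ord n u).ncard : ℕ) : ℝ) ≤ k * n + ε * (n : ℝ) ^ 2 := by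
  classical
  have himg : (Finset.Icc 1 n).image ord = Finset.univ := by
    apply Finset.eq_univ_iff_forall.mpr
    intro u
    obtain ⟨i, hi, rfl⟩ := hsurj u
    exact Finset.mem_image_of_mem ord hi
  have hcardV : Fintype.card V = n := by
    rw [← Finset.card_univ, ← himg,
      Finset.card_image_of_injOn (fun i hi j hj => hinj i hi j hj)]
    rw [Nat.card_Icc]
    omega
  set good : Set (V × V) := {p : V × V |
      (⨅ i ∈ Finset.Icc 1 k, (G.edist p.1 (ord i) + G.edist (ord i) p.2))
        = G.edist p.1 p.2} with hgood
  set S : V → Finset ℕ := fun u =>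
    (Finset.Icc 1 n).filter (fun i => (ord i, G.edist (ord i) u) ∈ prunedL G ord n u) with hS
  have hSsub : ∀ u, S u ⊆ Finset.Icc 1 n := fun u => Finset.filter_subset _ _
  have hset : ∀ u, prunedL G ord n u
      = ↑((S u).image (fun i => ((ord i, G.edist (ord i) u) : V × ℕ∞))) := by
    intro u
    ext ⟨w, d⟩
    constructor
    · intro hx
      obtain ⟨i, h1, h2, hw, hd, -, -⟩ := prunedL_mem hx
      subst hw; subst hd
      simp only [Finset.coe_image, Set.mem_image, Finset.mem_coe]
      exact ⟨i, by simp [hS, Finset.mem_Icc, h1, h2, hx], rfl⟩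
    · intro hx
      simp only [Finset.coe_image, Set.mem_image, Finset.mem_coe, hS,
        Finset.mem_filter] at hx
      obtain ⟨i, ⟨-, hmem⟩, heq⟩ := hx
      exact heq ▸ hmem
  have hnc : ∀ u, (prunedL G ord n u).ncard = (S u).card := by
    intro u
    rw [hset u, Set.ncard_coe_finset, Finset.card_image_of_injOn]
    intro i hi j hj he
    exact hinj i (hSsub u (Finset.mem_coe.mp hi)) j (hSsub u (Finset.mem_coe.mp hj))
      (congrArg Prod.fst he)
  set T : V → Finset ℕ := fun u => (S u).filter (fun i => k < i) with hT
  -- every i ∈ T u gives a "bad" pair (ord i, u)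
  have hTbad : ∀ u, ∀ i ∈ T u, ((ord i, u) : V × V) ∈ goodᶜ := by
    intro u i hi
    simp only [hT, Finset.mem_filter] at hi
    obtain ⟨hiS, hki⟩ := hi
    simp only [hS, Finset.mem_filter, Finset.mem_Icc] at hiS
    obtain ⟨⟨hi1, hin⟩, hmem⟩ := hiS
    obtain ⟨i', h1', h2', hw', hd', hfin, hlt⟩ := prunedL_mem hmem
    have hii : i' = i :=
      hinj i' (Finset.mem_Icc.mpr ⟨h1', h2'⟩) i (Finset.mem_Icc.mpr ⟨hi1, hin⟩) hw'.symm
    subst hii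
    intro hg
    simp only [hgood, Set.mem_setOf_eq] at hg
    obtain ⟨j, hj, hjeq⟩ := Finset.exists_mem_eq_inf (Finset.Icc 1 k)
      ⟨1, Finset.mem_Icc.mpr ⟨le_refl 1, hk1⟩⟩
      (fun j => G.edist (ord i') (ord j) + G.edist (ord j) u)
    rw [Finset.inf_eq_iInf, hg] at hjeq
    rw [Finset.mem_Icc] at hj
    have hPGj : ord j ∈ PG G (ord i') u := by
      simp only [PG, Set.mem_setOf_eq]
      exact hjeq.symm
    have := query_correct (m := i' - 1) hfin j hj.1
      (le_trans hj.2 (Nat.le_sub_one_of_lt hki)) hPGj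
    exact absurd this (not_le.mpr hlt)
  have hsplit : ∀ u, (S u).card ≤ (T u).card + k := by
    intro u
    have heq : (T u).card + ((S u).filter (fun i => ¬ k < i)).card = (S u).card :=
      Finset.card_filter_add_card_filter_not (s := S u) (p := fun i => k < i)
    have hsub2 : (S u).filter (fun i => ¬ k < i) ⊆ Finset.Icc 1 k := by
      intro i hi
      simp only [Finset.mem_filter, not_lt] at hi
      have := Finset.mem_Icc.mp (hSsub u hi.1)
      exact Finset.mem_Icc.mpr ⟨this.1, hi.2⟩
    have hk' : ((S u).filter (fun i => ¬ k < i)).card ≤ k := by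
      calc ((S u).filter (fun i => ¬ k < i)).card ≤ (Finset.Icc 1 k).card :=
            Finset.card_le_card hsub2
        _ = k := by rw [Nat.card_Icc]; omega
    omega
  have hsumT : (∑ u : V, (T u).card) ≤ (goodᶜ).ncard := by
    have hinj2 : ∀ u : V, Set.InjOn (fun i => ((ord i, u) : V × V)) ↑(T u) := by
      intro u i hi j hj he
      simp only [Finset.mem_coe] at hi hj
      exact hinj i (hSsub u ((Finset.filter_subset _ _) hi))
        j (hSsub u ((Finset.filter_subset _ _) hj)) (congrArg Prod.fst he)
    have hdisj : ∀ u1 ∈ (Finset.univ : Finset V), ∀ u2 ∈ Finset.univ, u1 ≠ u2 →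
        Disjoint ((T u1).image (fun i => ((ord i, u1) : V × V)))
          ((T u2).image (fun i => ((ord i, u2) : V × V))) := by
      intro u1 _ u2 _ hne
      simp only [Finset.disjoint_left, Finset.mem_image]
      rintro ⟨a, b⟩ ⟨i, -, hi⟩ ⟨j, -, hj⟩
      apply hne
      simp only [Prod.mk.injEq] at hi hj
      exact hi.2.trans hj.2.symm
    calc (∑ u : V, (T u).card)
        = ∑ u : V, ((T u).image (fun i => ((ord i, u) : V × V))).card := by
          refine Finset.sum_congr rfl fun u _ => ?_
          rw [Finset.card_image_of_injOn (hinj2 u)]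
      _ = ((Finset.univ : Finset V).biUnion
            (fun u => (T u).image (fun i => ((ord i, u) : V × V)))).card :=
          (Finset.card_biUnion hdisj).symm
      _ ≤ (goodᶜ).toFinset.card := by
          apply Finset.card_le_card
          intro p hp
          simp only [Finset.mem_biUnion, Finset.mem_image] at hp
          obtain ⟨u, -, i, hi, rfl⟩ := hp
          exact Set.mem_toFinset.mpr (hTbad u i hi)
      _ = (goodᶜ).ncard := (Set.ncard_eq_toFinset_card' _).symm
  -- counting compl
  have hcompl : good.ncard + (goodᶜ).ncard = n ^ 2 := by
    rw [Set.ncard_add_ncard_compl, Nat.card_eq_fintype_card, Fintype.card_prod, hcardV]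
    ring
  have hgood_le : (goodᶜ.ncard : ℝ) ≤ ε * (n : ℝ) ^ 2 := by
    have h1 : (good.ncard : ℝ) + (goodᶜ.ncard : ℝ) = (n : ℝ) ^ 2 := by
      exact_mod_cast congrArg (Nat.cast : ℕ → ℝ) hcompl
    linarith
  have hnat : (∑ u : V, (prunedL G ord n u).ncard) ≤ n * k + (goodᶜ).ncard := by
    calc (∑ u : V, (prunedL G ord n u).ncard) = ∑ u : V, (S u).card := by
          exact Finset.sum_congr rfl fun u _ => hnc u
      _ ≤ ∑ u : V, ((T u).card + k) := Finset.sum_le_sum fun u _ => hsplit u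
      _ = (∑ u : V, (T u).card) + n * k := by
          rw [Finset.sum_add_distrib, Finset.sum_const, Finset.card_univ, hcardV, smul_eq_mul]
      _ ≤ (goodᶜ).ncard + n * k := Nat.add_le_add_right hsumT _
      _ = n * k + (goodᶜ).ncard := by ring
  have : ((∑ u : V, (prunedL G ord n u).ncard : ℕ) : ℝ) ≤ (n : ℝ) * k + (goodᶜ.ncard : ℝ) := by
    exact_mod_cast hnat
  calc ((∑ u : V, (prunedL G ord n u).ncard : ℕ) : ℝ)
      ≤ (n : ℝ) * k + (goodᶜ.ncard : ℝ) := this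
    _ ≤ k * n + ε * (n : ℝ) ^ 2 := by linarith
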